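/- arXiv:2512.21140 — 3 statements merged into one kernel-verified Lean document; each statement's English description precedes it below -/
import Mathlib

section
/- An ideal I on κ has the approximation property if and only if I admits a basis of cardinality at most κ. -/
open Set Cardinal TopologicalSpace

/-- A κ-complete proper ideal on κ extending the ideal of bounded sets. -/
structure IsGoodIdeal (κ : Type) [LinearOrder κ] (I : Set (Set κ)) : Prop where
  lower : ∀ ⦃A B : Set κ⦄, A ⊆ B → B ∈ I → A ∈ I
  complete : ∀ J : Set (Set κ), J ⊆ I → #J < #κ → ⋃₀ J ∈ I
  proper : (Set.univ : Set κ) ∉ I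
  bounded_mem : ∀ s : Set κ, Set.Bounded (· < ·) s → s ∈ I

/-- The basic cone `N_f` determined by the restriction of `f` to `D`. -/
def cone {κ ν : Type} (D : Set κ) (f : κ → ν) : Set (κ → ν) :=
  {x | ∀ α ∈ D, x α = f α}

/-- The ideal topology `τ_I` on `ν^κ`. -/
def idealTop {κ : Type} (I : Set (Set κ)) (ν : Type) : TopologicalSpace (κ → ν) :=
  TopologicalSpace.generateFrom {S | ∃ D ∈ I, ∃ f : κ → ν, S = cone D f}

/-- The bounded topology `τ_b` on `ν^κ`. -/
def boundedTop (κ ν : Type) [LinearOrder κ] : TopologicalSpace (κ → ν) :=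
  TopologicalSpace.generateFrom
    {S | ∃ D : Set κ, Set.Bounded (· < ·) D ∧ ∃ f : κ → ν, S = cone D f}

/-! The approximating sequence is `B α = [0, α) ∪ ⋃_{β < α} (f β ∪ {p β})`, where `f` enumerates
the basis and the point `p α ∉ B α` is chosen by recursion on `α`. Each `B α` is a union of fewer
than `κ` members of `I`, so such a point exists. The points `p α` make the sequence strictly
increasing, and every `A ∈ I` lies in some `f β ⊆ B γ` with `β < γ`; for `γ < α`, `B α` contains
`p γ ∉ B γ ⊇ A`, so `A ⊂ B α`. -/

theorem WellFounded.exists_forall_apply_mem {α ν : Type*} [Nonempty ν] {r : α → α → Prop}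
    (hr : WellFounded r) (S : (α → ν) → α → Set ν)
    (hS : ∀ p q a, (∀ b, r b a → p b = q b) → S p a = S q a)
    (hne : ∀ p a, (S p a).Nonempty) :
    ∃ p : α → ν, ∀ a, p a ∈ S p a := by
  classical
  let extend (a : α) (g : ∀ b, r b a → ν) : α → ν := fun b =>
    if h : r b a then g b h else Classical.arbitrary ν
  let p : α → ν := hr.fix fun a g => (hne (extend a g) a).some
  refine ⟨p, fun a => ?_⟩
  have hp : p a = (hne (extend a fun b _ => p b) a).some := hr.fix_eq _ a
  rw [hp, hS p (extend a fun b _ => p b) a fun b hb => by simp only [extend, dif_pos hb]]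
  exact Nonempty.some_mem _

theorem noMaxOrder_of_type_eq_ord {κ : Type} [LinearOrder κ] [WellFoundedLT κ]
    (htype : Ordinal.type ((· < ·) : κ → κ → Prop) = (#κ).ord) (hκ : ℵ₀ ≤ #κ) :
    NoMaxOrder κ :=
  Ordinal.isSuccPrelimit_type_lt_iff.1 (htype ▸ (isSuccLimit_ord hκ).isSuccPrelimit)

theorem exists_seq_of_basis {κ : Type} {I Bs : Set (Set κ)} (hBs : Bs ⊆ I) (hcard : #Bs ≤ #κ)
    (hcov : ∀ A ∈ I, ∃ D ∈ Bs, A ⊆ D) (hI : I.Nonempty) :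
    ∃ f : κ → Set κ, (∀ x, f x ∈ I) ∧ ∀ A ∈ I, ∃ x, A ⊆ f x := by
  obtain ⟨g⟩ := hcard
  have : Nonempty Bs := let ⟨A, hA⟩ := hI; let ⟨D, hD, _⟩ := hcov A hA; ⟨⟨D, hD⟩⟩
  let e : κ → Bs := Function.invFun g
  refine ⟨fun x => e x, fun x => hBs (e x).2, fun A hA => ?_⟩
  obtain ⟨D, hD, hAD⟩ := hcov A hA
  obtain ⟨x, hx⟩ : ∃ x, e x = ⟨D, hD⟩ := Function.invFun_surjective g.injective _
  exact ⟨x, by simpa only [hx] using hAD⟩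

namespace IsGoodIdeal

variable {κ : Type} [LinearOrder κ] {I : Set (Set κ)}

theorem compl_nonempty (hI : IsGoodIdeal κ I) {A : Set κ} (hA : A ∈ I) : Aᶜ.Nonempty := by
  rw [nonempty_compl]
  rintro rfl
  exact hI.proper hA

theorem Iio_mem (hI : IsGoodIdeal κ I) (α : κ) : Iio α ∈ I :=
  hI.bounded_mem _ (bounded_lt_Iio α)

theorem singleton_mem [NoMaxOrder κ] (hI : IsGoodIdeal κ I) (α : κ) : {α} ∈ I :=
  hI.bounded_mem _ ((bounded_lt_Iic α).mono (singleton_subset_iff.2 self_mem_Iic))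

theorem iUnion_mem (hI : IsGoodIdeal κ I) {ι : Type} {s : ι → Set κ} (hs : ∀ i, s i ∈ I)
    (hι : #ι < #κ) : ⋃ i, s i ∈ I := by
  rw [← sUnion_range]
  exact hI.complete _ (range_subset_iff.2 hs) (mk_range_le.trans_lt hι)

theorem union_mem (hI : IsGoodIdeal κ I) (hκ : ℵ₀ ≤ #κ) {A B : Set κ} (hA : A ∈ I)
    (hB : B ∈ I) : A ∪ B ∈ I := by
  rw [union_eq_iUnion]
  refine hI.iUnion_mem (fun b => ?_) ((lt_aleph0_of_finite Bool).trans_le hκ)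
  cases b <;> assumption

theorem biUnion_Iio_mem [WellFoundedLT κ] (hI : IsGoodIdeal κ I)
    (htype : Ordinal.type ((· < ·) : κ → κ → Prop) = (#κ).ord) {t : κ → Set κ}
    (ht : ∀ β, t β ∈ I) (α : κ) : ⋃ β < α, t β ∈ I := by
  rw [show ⋃ β < α, t β = ⋃ β : Iio α, t β from biUnion_eq_iUnion (Iio α) fun β _ => t β]
  exact hI.iUnion_mem (fun β => ht β) (mk_Iio_lt α htype.symm)

end IsGoodIdeal

section ApproxSeq

variable {κ : Type} [LinearOrder κ]

def approxSeq (f : κ → Set κ) (p : κ → κ) (α : κ) : Set κ :=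
  Iio α ∪ ⋃ β < α, (f β ∪ {p β})

variable {f : κ → Set κ} {p : κ → κ} {α β γ : κ}

theorem approxSeq_congr {q : κ → κ} (h : ∀ β < α, p β = q β) :
    approxSeq f p α = approxSeq f q α := by
  unfold approxSeq
  congr 1
  exact iUnion₂_congr fun β hβ => by rw [h β hβ]

theorem subset_approxSeq_of_lt (h : β < α) : f β ∪ {p β} ⊆ approxSeq f p α :=
  fun _ hx => Or.inr (mem_biUnion h hx)

theorem approxSeq_mono : Monotone (approxSeq f p) := fun _ _ hαβ =>
  union_subset_union (Iio_subset_Iio hαβ)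
    (iUnion₂_subset fun _ hδ => subset_iUnion₂_of_subset _ (hδ.trans_le hαβ) subset_rfl)

theorem approxSeq_eq_biUnion (hα : ∀ β < α, ∃ γ, β < γ ∧ γ < α) :
    approxSeq f p α = ⋃ β < α, approxSeq f p β := by
  refine (union_subset (fun x hx => ?_) (iUnion₂_subset fun β hβ => ?_)).antisymm
    (iUnion₂_subset fun β hβ => approxSeq_mono hβ.le)
  · obtain ⟨γ, hxγ, hγα⟩ := hα x hx
    exact mem_biUnion hγα (Or.inl hxγ)
  · obtain ⟨γ, hβγ, hγα⟩ := hα β hβ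
    exact (subset_approxSeq_of_lt hβγ).trans (subset_biUnion_of_mem (u := approxSeq f p) hγα)

theorem approxSeq_eq_empty (hα : IsMin α) : approxSeq f p α = ∅ := by
  simp [approxSeq, Iio_eq_empty_iff.2 hα, hα.not_lt]

theorem approxSeq_strictMono (hp : ∀ α, p α ∉ approxSeq f p α) :
    StrictMono (approxSeq f p) := fun α _ hαβ =>
  ssubset_of_subset_not_subset (approxSeq_mono hαβ.le) fun hsub =>
    hp α (hsub (subset_approxSeq_of_lt hαβ (Or.inr rfl)))

theorem ssubset_approxSeq (hp : ∀ α, p α ∉ approxSeq f p α) {A : Set κ} (hA : A ⊆ f β)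
    (hβγ : β < γ) (hγα : γ < α) : A ⊂ approxSeq f p α := by
  have hAγ : A ⊆ approxSeq f p γ := hA.trans (subset_union_left.trans (subset_approxSeq_of_lt hβγ))
  refine ssubset_of_subset_not_subset (hAγ.trans (approxSeq_mono hγα.le)) fun hsub => hp γ ?_
  exact hAγ (hsub (subset_approxSeq_of_lt hγα (Or.inr rfl)))

theorem approxSeq_mem [WellFoundedLT κ] [NoMaxOrder κ] {I : Set (Set κ)} (hI : IsGoodIdeal κ I)
    (htype : Ordinal.type ((· < ·) : κ → κ → Prop) = (#κ).ord) (hκ : ℵ₀ ≤ #κ)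
    (hf : ∀ β, f β ∈ I) (p : κ → κ) (α : κ) : approxSeq f p α ∈ I :=
  hI.union_mem hκ (hI.Iio_mem α) <| hI.biUnion_Iio_mem htype
    (fun β => hI.union_mem hκ (hf β) (hI.singleton_mem (p β))) α

end ApproxSeq

theorem stmt_1_general (κ : Type) [LinearOrder κ] [IsWellOrder κ (· < ·)]
    (htype : Ordinal.type ((· < ·) : κ → κ → Prop) = (#κ).ord)
    (hunc : ℵ₀ < #κ)
    (I : Set (Set κ)) (hI : IsGoodIdeal κ I) :
    (∃ B : κ → Set κ,
        (∀ α, B α ∈ I) ∧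
        (∀ ⦃α β : κ⦄, α < β → B α ⊂ B β) ∧
        (∀ α : κ, ((∃ β, β < α) ∧ ∀ β < α, ∃ γ, β < γ ∧ γ < α) →
          B α = ⋃ β < α, B β) ∧
        (∀ α : κ, IsMin α → B α = ∅) ∧
        (∀ A ∈ I, ∃ α : κ, A ⊂ B α)) ↔
    (∃ B : Set (Set κ), B ⊆ I ∧ #↥B ≤ #κ ∧ ∀ A ∈ I, ∃ D ∈ B, A ⊆ D) := by
  constructor
  · rintro ⟨B, hBI, -, -, -, hcov⟩
    refine ⟨range B, range_subset_iff.2 hBI, mk_range_le, fun A hA => ?_⟩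
    obtain ⟨α, hα⟩ := hcov A hA
    exact ⟨B α, mem_range_self α, hα.subset⟩
  · rintro ⟨Bs, hBsI, hcard, hcov⟩
    have : Nonempty κ := mk_ne_zero_iff.1 (aleph0_pos.trans hunc).ne'
    have : NoMaxOrder κ := noMaxOrder_of_type_eq_ord htype hunc.le
    obtain ⟨f, hfI, hfcov⟩ := exists_seq_of_basis hBsI hcard hcov
      ⟨_, hI.Iio_mem (Classical.arbitrary κ)⟩
    have hmem := approxSeq_mem hI htype hunc.le hfI
    obtain ⟨p, hp⟩ := wellFounded_lt.exists_forall_apply_mem (fun p α => (approxSeq f p α)ᶜ)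
      (fun p q α h => by rw [approxSeq_congr h]) fun p α => hI.compl_nonempty (hmem p α)
    refine ⟨approxSeq f p, hmem p, approxSeq_strictMono hp,
      fun α hα => approxSeq_eq_biUnion hα.2, fun α hα => approxSeq_eq_empty hα, fun A hA => ?_⟩
    obtain ⟨β, hAβ⟩ := hfcov A hA
    obtain ⟨γ, hβγ⟩ := exists_gt β
    obtain ⟨α, hγα⟩ := exists_gt γ
    exact ⟨α, ssubset_approxSeq hp hAβ hβγ hγα⟩

/-- the approximation property holds iff `I` has a basis of cardinality at
most `κ`. -/
theorem stmt_1 (κ : Type) [LinearOrder κ] [IsWellOrder κ (· < ·)]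
    (htype : Ordinal.type ((· < ·) : κ → κ → Prop) = (#κ).ord)
    (hreg : (#κ).IsRegular) (hunc : ℵ₀ < #κ)
    (I : Set (Set κ)) (hI : IsGoodIdeal κ I) :
    (∃ B : κ → Set κ,
        (∀ α, B α ∈ I) ∧
        (∀ ⦃α β : κ⦄, α < β → B α ⊂ B β) ∧
        (∀ α : κ, ((∃ β, β < α) ∧ ∀ β < α, ∃ γ, β < γ ∧ γ < α) →
          B α = ⋃ β < α, B β) ∧
        (∀ α : κ, IsMin α → B α = ∅) ∧
        (∀ A ∈ I, ∃ α : κ, A ⊂ B α)) ↔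
    (∃ B : Set (Set κ), B ⊆ I ∧ #↥B ≤ #κ ∧ ∀ A ∈ I, ∃ D ∈ B, A ⊆ D) :=
  stmt_1_general κ htype hunc I hI
end

section
/- Suppose I contains an unbounded subset D of κ. Then the family C_D = {N_f : f ∈ ν^D} is a partition of ν^κ into 2^κ-many (at least) nonempty pairwise disjoint I-clopen sets; consequently (ν^κ, τ_I) is not κ-compact (there is an open cover with no subcover of size < κ), and its density character is exactly 2^κ. -/
open Set Cardinal TopologicalSpace

/-!
The cones `N_f`, `f ∈ ν^D`, are the fibres of the restriction map `ν^κ → ν^D`. Since `D ∈ I`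
every fibre is open, so restriction is continuous into the discrete space `ν^D` and the cones
form a partition of `ν^κ` into clopen sets indexed by `ν^D`. An unbounded `D ∈ I` has size `κ`:
otherwise `κ`-completeness would put `κ = D ∪ ⋃_{d ∈ D} [0, d)` into `I`. Hence `|ν^D| ≥ 2^κ`.
A cover by the pieces of a partition into nonempty sets has no proper subcover, and a dense set meets every piece,
which gives the lower bounds; the whole space has size `ν^κ ≤ κ^κ = 2^κ`.
-/

universe u

namespace Function.Surjective

variable {X Y : Type u} {π : X → Y}

theorem mk_range_preimage_singleton (hπ : Surjective π) :
    #(range fun y => π ⁻¹' {y}) = #Y :=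
  mk_range_eq _ (hπ.preimage_injective.comp singleton_injective)

theorem eq_range_preimage_singleton_of_sUnion_eq_univ (hπ : Surjective π)
    {𝒟 : Set (Set X)} (h𝒟 : 𝒟 ⊆ range fun y => π ⁻¹' {y}) (hcov : ⋃₀ 𝒟 = Set.univ) :
    𝒟 = range fun y => π ⁻¹' {y} := by
  refine h𝒟.antisymm ?_
  rintro _ ⟨y, rfl⟩
  obtain ⟨x, rfl⟩ := hπ y
  obtain ⟨S, hS, hxS⟩ := sUnion_eq_univ_iff.1 hcov x
  obtain ⟨y', rfl⟩ := h𝒟 hS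
  rwa [show π x = y' from hxS]

end Function.Surjective

theorem Cardinal.mk_le_of_forall_preimage_singleton_inter_nonempty {X Y : Type u} {π : X → Y}
    {E : Set X} (hE : ∀ y, (π ⁻¹' {y} ∩ E).Nonempty) : #Y ≤ #E :=
  mk_le_of_surjective (f := fun e : E => π e) fun y =>
    let ⟨e, he, heE⟩ := hE y
    ⟨⟨e, heE⟩, he⟩

theorem IsGoodIdeal.mk_eq_of_not_bounded {κ : Type} [LinearOrder κ] {I : Set (Set κ)}
    (hI : IsGoodIdeal κ I) (hκ : ℵ₀ ≤ #κ) {D : Set κ} (hD : D ∈ I)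
    (hDub : ¬ Bounded (· < ·) D) : #D = #κ := by
  have hcofinal : ∀ x, ∃ d ∈ D, x ≤ d := by simpa [Bounded] using hDub
  refine (mk_set_le D).antisymm (not_lt.1 fun hlt => hI.proper ?_)
  have hIio : Iio '' D ⊆ I := image_subset_iff.2 fun d _ => hI.bounded_mem _ ⟨d, fun _ => id⟩
  have hsmall : #(insert D (Iio '' D) : Set (Set κ)) < #κ :=
    mk_insert_le.trans_lt (add_one_lt_of_lt hκ (mk_image_le.trans_lt hlt))
  refine hI.lower (fun x _ => ?_) (hI.complete _ (insert_subset hD hIio) hsmall)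
  obtain ⟨d, hd, hxd⟩ := hcofinal x
  rcases hxd.lt_or_eq with hxd | hxd
  · exact ⟨Iio d, mem_insert_of_mem _ ⟨d, hd, rfl⟩, hxd⟩
  · exact ⟨D, mem_insert _ _, hxd ▸ hd⟩

section Cone

variable {κ ν : Type} {D : Set κ}

theorem mem_cone_self (D : Set κ) (f : κ → ν) : f ∈ cone D f := fun _ _ => rfl

theorem cone_eq_preimage_domRestrict (D : Set κ) (f : κ → ν) :
    cone D f = D.domRestrict (π := fun _ => ν) ⁻¹' {D.domRestrict f} := by
  ext x
  simp [cone, funext_iff]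

theorem Set.surjective_domRestrict [Nonempty ν] (D : Set κ) :
    Function.Surjective (D.domRestrict : (κ → ν) → D → ν) :=
  Subtype.surjective_restrict _

theorem setOf_cone_eq_range_preimage [Nonempty ν] (D : Set κ) :
    {S | ∃ f : κ → ν, S = cone D f} =
      range fun y : D → ν => D.domRestrict (π := fun _ => ν) ⁻¹' {y} := by
  have h := (Set.surjective_domRestrict (ν := ν) D).range_comp
    fun y : D → ν => D.domRestrict (π := fun _ => ν) ⁻¹' {y}
  rw [← h]
  ext S
  simp [cone_eq_preimage_domRestrict, eq_comm]

theorem mk_setOf_cone [Nonempty ν] (D : Set κ) :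
    #{S | ∃ f : κ → ν, S = cone D f} = #(D → ν) := by
  rw [setOf_cone_eq_range_preimage]
  exact (Set.surjective_domRestrict D).mk_range_preimage_singleton

theorem eq_setOf_cone_of_sUnion_eq_univ [Nonempty ν] {𝒟 : Set (Set (κ → ν))}
    (h𝒟 : 𝒟 ⊆ {S | ∃ f, S = cone D f}) (hcov : ⋃₀ 𝒟 = Set.univ) :
    𝒟 = {S | ∃ f, S = cone D f} := by
  rw [setOf_cone_eq_range_preimage] at h𝒟 ⊢
  exact (Set.surjective_domRestrict D).eq_range_preimage_singleton_of_sUnion_eq_univ h𝒟 hcov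

theorem disjoint_cone {f g : κ → ν} (h : ∃ α ∈ D, f α ≠ g α) :
    Disjoint (cone D f) (cone D g) :=
  disjoint_left.2 fun _ hf hg =>
    let ⟨α, hα, hne⟩ := h
    hne ((hf α hα).symm.trans (hg α hα))

theorem iUnion_cone (D : Set κ) : ⋃ f : κ → ν, cone D f = Set.univ :=
  iUnion_eq_univ_iff.2 fun x => ⟨x, mem_cone_self D x⟩

theorem isOpen_cone {I : Set (Set κ)} (hD : D ∈ I) (f : κ → ν) :
    @IsOpen _ (idealTop I ν) (cone D f) :=
  isOpen_generateFrom_of_mem ⟨D, hD, f, rfl⟩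

theorem continuous_domRestrict_idealTop [Nonempty ν] {I : Set (Set κ)} (hD : D ∈ I) :
    @Continuous _ _ (idealTop I ν) ⊥ (D.domRestrict : (κ → ν) → D → ν) := by
  let _ : TopologicalSpace (D → ν) := ⊥
  have : DiscreteTopology (D → ν) := ⟨rfl⟩
  let _ := idealTop I ν
  refine continuous_discrete_rng.2 fun y => ?_
  obtain ⟨f, rfl⟩ := Set.surjective_domRestrict D y
  rw [← cone_eq_preimage_domRestrict]
  exact isOpen_cone hD f

theorem isClopen_cone [Nonempty ν] {I : Set (Set κ)} (hD : D ∈ I) (f : κ → ν) :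
    @IsClopen _ (idealTop I ν) (cone D f) := by
  let _ : TopologicalSpace (D → ν) := ⊥
  have : DiscreteTopology (D → ν) := ⟨rfl⟩
  let _ := idealTop I ν
  rw [cone_eq_preimage_domRestrict]
  exact (isClopen_discrete _).preimage (continuous_domRestrict_idealTop hD)

theorem mk_le_of_dense_idealTop [Nonempty ν] {I : Set (Set κ)} (hD : D ∈ I) {E : Set (κ → ν)}
    (hE : @Dense _ (idealTop I ν) E) : #(D → ν) ≤ #E := by
  let _ := idealTop I ν
  refine mk_le_of_forall_preimage_singleton_inter_nonempty (π := D.domRestrict) fun y => ?_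
  obtain ⟨f, rfl⟩ := Set.surjective_domRestrict D y
  rw [← cone_eq_preimage_domRestrict]
  exact hE.inter_open_nonempty _ (isOpen_cone hD f) ⟨f, mem_cone_self D f⟩

end Cone

theorem stmt_6_general (κ ν : Type) [LinearOrder κ]
    (hunc : ℵ₀ < #κ) (hν : #ν = 2 ∨ #ν = #κ)
    (I : Set (Set κ)) (hI : IsGoodIdeal κ I)
    (D : Set κ) (hD : D ∈ I) (hDub : ¬ Set.Bounded (· < ·) D) :
    (∀ f : κ → ν, (cone D f).Nonempty ∧ @IsClopen _ (idealTop I ν) (cone D f)) ∧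
    (∀ f g : κ → ν, (∃ α ∈ D, f α ≠ g α) → Disjoint (cone D f) (cone D g)) ∧
    (⋃ f : κ → ν, cone D f) = Set.univ ∧
    (2 : Cardinal) ^ #κ ≤ #↥{S : Set (κ → ν) | ∃ f : κ → ν, S = cone D f} ∧
    (∃ 𝒞 : Set (Set (κ → ν)), (∀ U ∈ 𝒞, @IsOpen _ (idealTop I ν) U) ∧ ⋃₀ 𝒞 = Set.univ ∧
      ∀ 𝒟 ⊆ 𝒞, ⋃₀ 𝒟 = Set.univ → #κ ≤ #↥𝒟) ∧
    (∀ E : Set (κ → ν), @Dense _ (idealTop I ν) E → (2 : Cardinal) ^ #κ ≤ #↥E) ∧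
    (∃ E : Set (κ → ν), @Dense _ (idealTop I ν) E ∧ #↥E ≤ (2 : Cardinal) ^ #κ) := by
  let _ := idealTop I ν
  have h2κ : (2 : Cardinal) ≤ #κ := (natCast_lt_aleph0 (n := 2)).le.trans hunc.le
  have h2ν : (2 : Cardinal) ≤ #ν := hν.elim (·.ge) (· ▸ h2κ)
  have hνκ : #ν ≤ #κ := hν.elim (· ▸ h2κ) (·.le)
  have : Nonempty ν := mk_ne_zero_iff.1 ((two_pos.trans_le h2ν).ne')
  have hcard : 2 ^ #κ ≤ #(D → ν) := by
    rw [← power_def, hI.mk_eq_of_not_bounded hunc.le hD hDub]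
    exact power_le_power_right h2ν
  refine ⟨fun f => ⟨⟨f, mem_cone_self D f⟩, isClopen_cone hD f⟩, fun f g => disjoint_cone,
    iUnion_cone D, (mk_setOf_cone (ν := ν) D).symm ▸ hcard,
    ⟨{S | ∃ f, S = cone D f}, ?_, ?_, fun 𝒟 h𝒟 hcov => ?_⟩,
    fun E hE => hcard.trans (mk_le_of_dense_idealTop hD hE), ⟨Set.univ, dense_univ, ?_⟩⟩
  · rintro _ ⟨f, rfl⟩
    exact isOpen_cone hD f
  · exact sUnion_eq_univ_iff.2 fun x => ⟨cone D x, ⟨x, rfl⟩, mem_cone_self D x⟩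
  · rw [eq_setOf_cone_of_sUnion_eq_univ h𝒟 hcov, mk_setOf_cone]
    exact (cantor _).le.trans hcard
  · rw [mk_univ, ← power_def, ← power_self_eq hunc.le]
    exact power_le_power_right hνκ

/-- if `D ∈ I` is unbounded, the cones `{N_f : f ∈ ν^D}` form a partition of
`ν^κ` into at least `2^κ`-many nonempty pairwise disjoint `I`-clopen sets; hence the
space is not `κ`-compact and its density character is exactly `2^κ`. -/
theorem stmt_6 (κ ν : Type) [LinearOrder κ]
    (hreg : (#κ).IsRegular) (hunc : ℵ₀ < #κ) (hν : #ν = 2 ∨ #ν = #κ)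
    (I : Set (Set κ)) (hI : IsGoodIdeal κ I)
    (D : Set κ) (hD : D ∈ I) (hDub : ¬ Set.Bounded (· < ·) D) :
    (∀ f : κ → ν, (cone D f).Nonempty ∧ @IsClopen _ (idealTop I ν) (cone D f)) ∧
    (∀ f g : κ → ν, (∃ α ∈ D, f α ≠ g α) → Disjoint (cone D f) (cone D g)) ∧
    (⋃ f : κ → ν, cone D f) = Set.univ ∧
    (2 : Cardinal) ^ #κ ≤ #↥{S : Set (κ → ν) | ∃ f : κ → ν, S = cone D f} ∧
    (∃ 𝒞 : Set (Set (κ → ν)), (∀ U ∈ 𝒞, @IsOpen _ (idealTop I ν) U) ∧ ⋃₀ 𝒞 = Set.univ ∧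
      ∀ 𝒟 ⊆ 𝒞, ⋃₀ 𝒟 = Set.univ → #κ ≤ #↥𝒟) ∧
    (∀ E : Set (κ → ν), @Dense _ (idealTop I ν) E → (2 : Cardinal) ^ #κ ≤ #↥E) ∧
    (∃ E : Set (κ → ν), @Dense _ (idealTop I ν) E ∧ #↥E ≤ (2 : Cardinal) ^ #κ) :=
  stmt_6_general κ ν hunc hν I hI D hD hDub
end

section
/- If I contains an unbounded subset of κ, then for every 1 ≤ α < κ⁺ there is no 2^κ-universal set for Σ⁰_α of the I-topology: there is no U ⊆ 2^κ × ν^κ with U ∈ Σ⁰_α(2^κ × ν^κ, τ_I×τ_I) such that Σ⁰_α(ν^κ, τ_I) = {U_y : y ∈ 2^κ}. The reason: |Σ⁰_α(ν^κ, τ_I)| = 2^{2^κ} (already at the level of open sets), while any family of sections {U_y : y ∈ 2^κ} has size at most 2^κ. -/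
open Set Cardinal TopologicalSpace

/-- Membership in the level `Σ⁰_a` of the `c⁺`-Borel hierarchy of `(X, t)`:
`Σ⁰_1` = open sets, and for `a > 1`, `Σ⁰_a` consists of unions of length at most `c`
of sets whose complements lie in `Σ⁰_b` for some `1 ≤ b < a`. -/
inductive SigmaMem {X : Type} (t : TopologicalSpace X) (c : Cardinal) :
    Ordinal → Set X → Prop
  | base (S : Set X) (h : @IsOpen X t S) : SigmaMem t c 1 S
  | iUnion (a : Ordinal) (ha : 1 < a) (ι : Type) (hι : #ι ≤ c) (f : ι → Set X)
      (b : ι → Ordinal) (hb : ∀ i, 1 ≤ b i ∧ b i < a)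
      (hf : ∀ i, SigmaMem t c (b i) (f i)ᶜ) :
      SigmaMem t c a (⋃ i, f i)

/-- The pointclass `Σ⁰_a`. -/
def Sigma0 {X : Type} (t : TopologicalSpace X) (c : Cardinal) (a : Ordinal) : Set (Set X) :=
  {S | SigmaMem t c a S}

/-- The pointclass `Π⁰_a`. -/
def Pi0 {X : Type} (t : TopologicalSpace X) (c : Cardinal) (a : Ordinal) : Set (Set X) :=
  {S | Sᶜ ∈ Sigma0 t c a}

/-- The pointclass `Δ⁰_a`. -/
def Delta0 {X : Type} (t : TopologicalSpace X) (c : Cardinal) (a : Ordinal) : Set (Set X) :=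
  Sigma0 t c a ∩ Pi0 t c a

/-- The `c⁺`-Borel sets: union of the hierarchy along all ordinals `< c⁺`. -/
def BorelSets {X : Type} (t : TopologicalSpace X) (c : Cardinal) : Set (Set X) :=
  {S | ∃ a : Ordinal, a < (Order.succ c).ord ∧ S ∈ Sigma0 t c a}

/-- if `I` contains an unbounded set, then for `1 ≤ a < κ⁺` there is no
`2^κ`-universal set for `Σ⁰_a` of the `I`-topology. -/
theorem stmt_19 (κ ν : Type) [LinearOrder κ]
    (hreg : (#κ).IsRegular) (hunc : ℵ₀ < #κ) (hν : #ν = 2 ∨ #ν = #κ)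
    (I : Set (Set κ)) (hI : IsGoodIdeal κ I)
    (hU : ∃ U ∈ I, ¬ Set.Bounded (· < ·) U)
    (a : Ordinal) (ha1 : 1 ≤ a) (ha : a < (Order.succ #κ).ord) :
    ¬ ∃ U : Set ((κ → Bool) × (κ → ν)),
        U ∈ Sigma0
          (@instTopologicalSpaceProd _ _ (idealTop I Bool) (idealTop I ν)) #κ a ∧
        Sigma0 (idealTop I ν) #κ a =
          {S : Set (κ → ν) | ∃ y : κ → Bool, S = {x | (y, x) ∈ U}} := by
  rintro ⟨V, hV, hEq⟩
  obtain ⟨E, hEI, hEnb⟩ := hU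
  have hν2 : (2 : Cardinal) ≤ #ν := by
    rcases hν with h | h
    · rw [h]
    · rw [h]
      exact le_of_lt (lt_of_lt_of_le (by exact_mod_cast Cardinal.nat_lt_aleph0 2) hunc.le)
  have hνne : Nonempty ν := by
    rw [← Cardinal.mk_ne_zero_iff]
    intro h0
    rw [h0] at hν2
    exact absurd hν2 (by norm_num)
  have hEnb' : ∀ y : κ, ∃ x ∈ E, y ≤ x := by
    intro y
    by_contra h
    push_neg at h
    exact hEnb ⟨y, fun x hx => h x hx⟩
  -- no maximal element
  have hnomax : ∀ x : κ, ∃ b, x < b := by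
    intro x
    by_contra h
    push_neg at h
    have hxE : x ∈ E := by
      obtain ⟨z, hz, hxz⟩ := hEnb' x
      exact le_antisymm (h z) hxz ▸ hz
    have h1 : {x} ∈ I := hI.lower (Set.singleton_subset_iff.2 hxE) hEI
    have h2 : {y : κ | y < x} ∈ I := hI.bounded_mem _ ⟨x, fun y hy => hy⟩
    have hpair : ({{y : κ | y < x}, {x}} : Set (Set κ)) ⊆ I := by
      rintro S hS
      rcases hS with rfl | rfl
      · exact h2
      · exact h1
    have hcard : #({{y : κ | y < x}, {x}} : Set (Set κ)) < #κ :=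
      lt_trans (((Set.finite_singleton _).insert _).lt_aleph0) hunc
    have huniv : (Set.univ : Set κ) ∈ I := by
      refine hI.lower (fun y _ => ?_) (hI.complete _ hpair hcard)
      rcases lt_or_eq_of_le (h y) with hy | hy
      · exact ⟨{y : κ | y < x}, Or.inl rfl, hy⟩
      · exact ⟨{x}, Or.inr rfl, hy⟩
    exact hI.proper huniv
  -- E has full cardinality
  have hEcard : #(↥E) = #κ := by
    refine le_antisymm (Cardinal.mk_set_le E) ?_
    by_contra hlt
    push_neg at hlt
    set J : Set (Set κ) := (fun x => {y : κ | y ≤ x}) '' E with hJdef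
    have hJsub : J ⊆ I := by
      rintro _ ⟨x, hx, rfl⟩
      obtain ⟨b, hb⟩ := hnomax x
      exact hI.bounded_mem _ ⟨b, fun y hy => lt_of_le_of_lt hy hb⟩
    have hJcard : #J < #κ := lt_of_le_of_lt Cardinal.mk_image_le hlt
    have huniv : (Set.univ : Set κ) ∈ I := by
      refine hI.lower (fun y _ => ?_) (hI.complete J hJsub hJcard)
      obtain ⟨x, hx, hyx⟩ := hEnb' y
      exact ⟨{z : κ | z ≤ x}, ⟨x, hx, rfl⟩, hyx⟩
    exact hI.proper huniv
  -- the family of clopen sets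
  classical
  let extE : (↥E → ν) → (κ → ν) := fun g α =>
    if h : α ∈ E then g ⟨α, h⟩ else Classical.arbitrary ν
  let S : Set (↥E → ν) → Set (κ → ν) := fun A => {x | (fun u : ↥E => x u) ∈ A}
  have hrestrict : ∀ g : ↥E → ν, (fun u : ↥E => extE g u) = g := by
    intro g
    funext u
    simp only [extE, dif_pos u.2]
  have hScone : ∀ A, S A = ⋃ g ∈ A, cone E (extE g) := by
    intro A
    ext x
    simp only [S, Set.mem_setOf_eq, Set.mem_iUnion, cone]
    constructor
    · intro hx
      refine ⟨fun u : ↥E => x u, hx, fun α hα => ?_⟩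
      simp only [extE, dif_pos hα]
    · rintro ⟨g, hg, hco⟩
      have : (fun u : ↥E => x u) = g := by
        funext u
        rw [hco u u.2]
        simp only [extE, dif_pos u.2]
      rw [this]
      exact hg
  have hSopen : ∀ A, @IsOpen _ (idealTop I ν) (S A) := by
    intro A
    rw [hScone]
    letI := idealTop I ν
    exact isOpen_biUnion fun g _ =>
      TopologicalSpace.GenerateOpen.basic _ ⟨E, hEI, extE g, rfl⟩
  have hScompl : ∀ A, (S A)ᶜ = S Aᶜ := by
    intro A
    ext x
    simp [S]
  have hSinj : Function.Injective S := by
    intro A A' h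
    ext g
    have h1 : extE g ∈ S A ↔ extE g ∈ S A' := by rw [h]
    simpa only [S, Set.mem_setOf_eq, hrestrict] using h1
  have hSmem : ∀ A, S A ∈ Sigma0 (idealTop I ν) #κ a := by
    intro A
    rcases eq_or_lt_of_le ha1 with h1 | h1
    · cases h1
      exact SigmaMem.base _ (hSopen A)
    · have hrw : S A = ⋃ _ : PUnit, S A := (Set.iUnion_const _).symm
      rw [Sigma0, Set.mem_setOf_eq, hrw]
      exact SigmaMem.iUnion a h1 PUnit
        (by rw [Cardinal.mk_punit]; exact le_of_lt (lt_trans one_lt_aleph0 hunc))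
        (fun _ => S A) (fun _ => 1) (fun _ => ⟨le_refl 1, h1⟩)
        (fun _ => by rw [hScompl]; exact SigmaMem.base _ (hSopen Aᶜ))
  have hch : ∀ A : Set (↥E → ν), ∃ y : κ → Bool, S A = {x | (y, x) ∈ V} := by
    intro A
    have := hSmem A
    rw [hEq] at this
    exact this
  choose F hF using hch
  have hFinj : Function.Injective F := by
    intro A A' h
    apply hSinj
    rw [hF A, hF A', h]
  have hle : #(Set (↥E → ν)) ≤ #(κ → Bool) := Cardinal.mk_le_of_injective hFinj
  rw [Cardinal.mk_set, ← Cardinal.power_def ν (↥E), ← Cardinal.power_def Bool κ,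
    Cardinal.mk_bool, hEcard] at hle
  have h4 : (2 : Cardinal) ^ #κ ≤ #ν ^ #κ := Cardinal.power_le_power_right hν2
  exact absurd ((lt_of_le_of_lt h4 (Cardinal.cantor _)).trans_le hle) (lt_irrefl _)
end
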